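/- arXiv:2406.04612 — 4 statements merged into one kernel-verified Lean document; each statement's English description precedes it below -/
import Mathlib

section
/- Let L ≥ 1 and suppose the attention matrices respect the graph (i.e., [A(l)]_{b,a} = 0 whenever (a,b) ∉ E). Then for every target node v and every edge e_{i,j}, the flow-form GAtt attribution equals the matrix-form GAtt attribution: Φ^v_{i,j} = Σ_{m=1}^{L} [C_L(L−m)]_{v,j}[A(m)]_{j,i}. (Proposition 1 of the paper.) -/
open Finset Matrix

/-- `Cmat A L k` is the matrix `C_L(k) = A(L) A(L-1) ⋯ A(L-k+1)`, with `C_L(0) = I`. -/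
def Cmat {V : Type*} [Fintype V] [DecidableEq V]
    (A : ℕ → Matrix V V ℝ) (L : ℕ) : ℕ → Matrix V V ℝ
  | 0 => 1
  | k + 1 => Cmat A L k * A (L - k)

/-- `walks E n j v` is the finite set of walks `w_0 = j, w_1, …, w_n = v` of length `n`
in the edge relation `E`.  A flow of length `m` from edge `e_{i,j}` to target node `v`
is precisely such a walk of length `n = m - 1` starting at `j`. -/
def walks {V : Type*} [Fintype V] [DecidableEq V]
    (E : V → V → Prop) [DecidableRel E] (n : ℕ) (j v : V) : Finset (Fin (n + 1) → V) :=
  Finset.univ.filter fun w =>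
    w 0 = j ∧ w (Fin.last n) = v ∧ ∀ t : Fin n, E (w t.castSucc) (w t.succ)

/-- The GAtt contribution of a flow of length `m = n + 1` (a walk `w` with `n` steps,
`w 0 = j`) starting at edge `e_{i,j}`:
`(∏_{k=2}^{m} [A(L-m+k)]_{w_{k-1}, w_{k-2}}) ⬝ [A(L-m+1)]_{j,i}`
(with the empty product being `1`), reindexed via `k = t + 2`. -/
def contrib {V : Type*} [Fintype V] [DecidableEq V]
    (A : ℕ → Matrix V V ℝ) (L n : ℕ) (i : V) (w : Fin (n + 1) → V) : ℝ :=
  (∏ t : Fin n, A (L - (n + 1) + (t.val + 2)) (w t.succ) (w t.castSucc)) *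
    A (L - (n + 1) + 1) (w 0) i

/-- The flow-form GAtt attribution `Φ^v_{i,j} = ∑_{m=1}^{L} ∑_{λ ∈ Λ_v^m(e_{i,j})} C(α[λ]) α[λ](1)`. -/
def gattFlow {V : Type*} [Fintype V] [DecidableEq V]
    (A : ℕ → Matrix V V ℝ) (E : V → V → Prop) [DecidableRel E] (L : ℕ) (v i j : V) : ℝ :=
  ∑ m ∈ Finset.Icc 1 L, ∑ w ∈ walks E (m - 1) j v, contrib A L (m - 1) i w

lemma consSum {V : Type*} [Fintype V] (n : ℕ) (F : (Fin (n+2) → V) → ℝ) :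
    ∑ w : Fin (n+2) → V, F w = ∑ x : V, ∑ w' : Fin (n+1) → V, F (Fin.cons x w') := by
  rw [← (Fin.consEquiv (fun _ : Fin (n+2) => V)).sum_comp, Fintype.sum_prod_type]
  rfl

lemma sumAllWalks {V : Type*} [Fintype V] [DecidableEq V]
    (A : ℕ → Matrix V V ℝ) (L : ℕ) :
    ∀ n, n ≤ L → ∀ v j : V,
      (∑ w : Fin (n+1) → V, if w 0 = j ∧ w (Fin.last n) = v then
        ∏ t : Fin n, A (L - n + t.val + 1) (w t.succ) (w t.castSucc) else 0)
      = Cmat A L n v j := by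
  intro n
  induction n with
  | zero =>
    intro _ v j
    rw [← ((Equiv.funUnique (Fin 1) V).symm).sum_comp
      (fun w : Fin 1 → V => if w 0 = j ∧ w (Fin.last 0) = v then
        ∏ t : Fin 0, A (L - 0 + t.val + 1) (w t.succ) (w t.castSucc) else 0)]
    simp only [Equiv.funUnique, Equiv.symm, Finset.prod_empty]
    simp [Cmat, Matrix.one_apply]
    by_cases h : j = v
    · subst h
      simp [Finset.filter_eq' Finset.univ j, and_self]
    · have he : Finset.filter (fun x => x = j ∧ x = v) Finset.univ = ∅ := by
        ext x; simp; rintro rfl; exact h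
      simp [he]
      exact fun h' => h h'.symm
  | succ n ih =>
    intro hn v j
    have hn' : n ≤ L := by omega
    rw [consSum n (fun w => if w 0 = j ∧ w (Fin.last (n+1)) = v then
        ∏ t : Fin (n+1), A (L - (n+1) + t.val + 1) (w t.succ) (w t.castSucc) else 0)]
    have key : ∀ x : V, ∀ w' : Fin (n+1) → V,
        (if (Fin.cons x w' : Fin (n+2) → V) 0 = j ∧
            (Fin.cons x w' : Fin (n+2) → V) (Fin.last (n+1)) = v then
          ∏ t : Fin (n+1), A (L - (n+1) + t.val + 1)
            ((Fin.cons x w' : Fin (n+2) → V) t.succ)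
            ((Fin.cons x w' : Fin (n+2) → V) t.castSucc) else 0)
        = (if x = j ∧ w' (Fin.last n) = v then
            (∏ s : Fin n, A (L - n + s.val + 1) (w' s.succ) (w' s.castSucc))
              * A (L - n) (w' 0) x else 0) := by
      intro x w'
      have h0 : (Fin.cons x w' : Fin (n+2) → V) 0 = x := rfl
      have hlast : (Fin.cons x w' : Fin (n+2) → V) (Fin.last (n+1)) = w' (Fin.last n) := by
        rw [show (Fin.last (n+1)) = (Fin.last n).succ from rfl, Fin.cons_succ]
      rw [h0, hlast]
      congr 1
      rw [Fin.prod_univ_succ]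
      have h1 : ∀ s : Fin n,
          A (L - (n+1) + (s.succ).val + 1) ((Fin.cons x w' : Fin (n+2) → V) s.succ.succ)
            ((Fin.cons x w' : Fin (n+2) → V) s.succ.castSucc)
          = A (L - n + s.val + 1) (w' s.succ) (w' s.castSucc) := by
        intro s
        have e : (s.succ.castSucc : Fin (n+2)) = (s.castSucc).succ := rfl
        rw [e, Fin.cons_succ, Fin.cons_succ]
        congr 2
        simp [Fin.val_succ]; omega
      rw [Finset.prod_congr rfl (fun s _ => h1 s)]
      have h2 : A (L - (n+1) + (0:Fin (n+1)).val + 1)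
            ((Fin.cons x w' : Fin (n+2) → V) (0:Fin (n+1)).succ)
            ((Fin.cons x w' : Fin (n+2) → V) (0:Fin (n+1)).castSucc)
          = A (L - n) (w' 0) x := by
        have e0 : ((0:Fin (n+1)).castSucc : Fin (n+2)) = 0 := rfl
        rw [e0, Fin.cons_zero,
          show ((0:Fin (n+1)).succ : Fin (n+2)) = ((0:Fin n.succ).succ) from rfl,
          Fin.cons_succ]
        congr 2
        simp; omega
      rw [h2, mul_comm]
    simp only [key]
    have hC : Cmat A L (n+1) v j = ∑ u : V, Cmat A L n v u * A (L - n) u j := by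
      simp [Cmat, Matrix.mul_apply]
    rw [hC]
    have hR : ∀ u : V, Cmat A L n v u * A (L - n) u j
        = ∑ w' : Fin (n+1) → V,
            (if w' 0 = u ∧ w' (Fin.last n) = v then
              (∏ s : Fin n, A (L - n + s.val + 1) (w' s.succ) (w' s.castSucc)) else 0)
              * A (L - n) u j := by
      intro u
      rw [← ih hn' v u, Finset.sum_mul]
    rw [Finset.sum_congr rfl fun u _ => hR u, Finset.sum_comm]
    conv_rhs => rw [Finset.sum_comm]
    refine Finset.sum_congr rfl fun w' _ => ?_
    simp only [ite_and, ite_mul, zero_mul, Finset.sum_ite_eq, Finset.sum_ite_eq',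
      Finset.mem_univ, if_true]

lemma sumWalksE {V : Type*} [Fintype V] [DecidableEq V]
    (A : ℕ → Matrix V V ℝ) (L : ℕ)
    (E : V → V → Prop) [DecidableRel E]
    (hresp : ∀ l, 1 ≤ l → l ≤ L → ∀ a b : V, ¬ E a b → A l b a = 0)
    (n : ℕ) (hn : n ≤ L) (v j : V) :
    (∑ w ∈ walks E n j v,
      ∏ t : Fin n, A (L - n + t.val + 1) (w t.succ) (w t.castSucc))
      = Cmat A L n v j := by
  rw [← sumAllWalks A L n hn v j, walks, Finset.sum_filter]
  refine Finset.sum_congr rfl fun w _ => ?_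
  by_cases hb : w 0 = j ∧ w (Fin.last n) = v
  · by_cases hE : ∀ t : Fin n, E (w t.castSucc) (w t.succ)
    · rw [if_pos ⟨hb.1, hb.2, hE⟩, if_pos hb]
    · rw [if_neg (by tauto), if_pos hb]
      push_neg at hE
      obtain ⟨t, ht⟩ := hE
      exact (Finset.prod_eq_zero (Finset.mem_univ t)
        (hresp _ (by omega) (by have := t.isLt; omega) _ _ ht)).symm
  · rw [if_neg (by tauto), if_neg hb]

/-- **Proposition 1.** For an `L`-layer attention model (`L ≥ 1`) whose attention matrices
respect the (symmetric, reflexive) graph `E`, the flow-form GAtt attribution equals the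
matrix form `φ^v_{i,j} = ∑_{m=1}^{L} [C_L(L-m)]_{v,j} [A(m)]_{j,i}`. -/
theorem gattFlow_eq_gattMat {V : Type*} [Fintype V] [DecidableEq V]
    (L : ℕ) (hL : 1 ≤ L) (A : ℕ → Matrix V V ℝ)
    (E : V → V → Prop) [DecidableRel E]
    (hsymm : Symmetric E) (hrefl : Reflexive E)
    (hresp : ∀ l, 1 ≤ l → l ≤ L → ∀ a b : V, ¬ E a b → A l b a = 0) :
    ∀ v i j : V,
      gattFlow A E L v i j =
        ∑ m ∈ Finset.Icc 1 L, Cmat A L (L - m) v j * A m j i := by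
  intro v i j
  unfold gattFlow
  have step1 : ∀ m ∈ Finset.Icc 1 L,
      (∑ w ∈ walks E (m - 1) j v, contrib A L (m - 1) i w)
        = Cmat A L (m - 1) v j * A (L - m + 1) j i := by
    intro m hm
    rw [Finset.mem_Icc] at hm
    have hsum : ∀ w ∈ walks E (m - 1) j v,
        contrib A L (m - 1) i w
          = (∏ t : Fin (m - 1), A (L - (m - 1) + t.val + 1) (w t.succ) (w t.castSucc))
              * A (L - m + 1) j i := by
      intro w hw
      rw [walks, Finset.mem_filter] at hw
      unfold contrib
      rw [hw.2.1]
      have harith : ∀ t : ℕ, L - (m - 1 + 1) + (t + 2) = L - (m - 1) + t + 1 := by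
        intro t; omega
      congr 1
      · exact Finset.prod_congr rfl fun t _ => by rw [harith t.val]
      · rw [show L - (m - 1 + 1) + 1 = L - m + 1 from by omega]
    rw [Finset.sum_congr rfl hsum, ← Finset.sum_mul,
      sumWalksE A L E hresp (m - 1) (by omega) v j]
  rw [Finset.sum_congr rfl step1]
  refine Finset.sum_nbij' (i := fun m => L + 1 - m) (j := fun m => L + 1 - m)
    ?_ ?_ ?_ ?_ ?_
  · intro m hm; rw [Finset.mem_Icc] at *; omega
  · intro m hm; rw [Finset.mem_Icc] at *; omega
  · intro m hm; rw [Finset.mem_Icc] at hm; omega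
  · intro m hm; rw [Finset.mem_Icc] at hm; omega
  · intro m hm
    rw [Finset.mem_Icc] at hm
    have h1 : L - (L + 1 - m) = m - 1 := by omega
    have h2 : L + 1 - m = L - m + 1 := by omega
    rw [h1, h2]
end

section
/- Suppose the attention matrices respect the graph (i.e., [A(l)]_{b,a} = 0 whenever (a,b) ∉ E). If j ≠ v and for every 1 ≤ k ≤ L−1 there is no walk of length k from j to v in E, then the matrix-form GAtt attribution vanishes: φ^v_{i,j} = 0 for every node i. (Locality of GAtt: edges outside the computation tree of the target node receive zero attribution.) -/
open Finset Matrix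

/-- The matrix-form GAtt attribution `φ^v_{i,j} = ∑_{m=1}^{L} [C_L(L-m)]_{v,j} [A(m)]_{j,i}`. -/
def gattMat {V : Type*} [Fintype V] [DecidableEq V]
    (A : ℕ → Matrix V V ℝ) (L : ℕ) (v i j : V) : ℝ :=
  ∑ m ∈ Finset.Icc 1 L, Cmat A L (L - m) v j * A m j i

/-- A nonzero entry of `Cmat A L k` at `(a, b)` yields a walk of length `k`
from `b` to `a` in `E`. -/
lemma walk_of_Cmat_ne_zero {V : Type*} [Fintype V] [DecidableEq V]
    (L : ℕ) (A : ℕ → Matrix V V ℝ) (E : V → V → Prop)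
    (hresp : ∀ l, 1 ≤ l → l ≤ L → ∀ a b : V, ¬ E a b → A l b a = 0) :
    ∀ k, k ≤ L - 1 → ∀ a b : V, Cmat A L k a b ≠ 0 →
      ∃ w : Fin (k + 1) → V,
        w 0 = b ∧ w (Fin.last k) = a ∧ ∀ t : Fin k, E (w t.castSucc) (w t.succ) := by
  intro k
  induction k with
  | zero =>
    intro _ a b hC
    have hab : a = b := by
      by_contra h
      simp [Cmat, Matrix.one_apply, h] at hC
    exact ⟨fun _ => b, rfl, by simp [hab], fun t => t.elim0⟩
  | succ k ih =>
    intro hk a b hC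
    have hC' : (Cmat A L k * A (L - k)) a b ≠ 0 := hC
    rw [Matrix.mul_apply] at hC'
    obtain ⟨x, _, hx⟩ := Finset.exists_ne_zero_of_sum_ne_zero hC'
    have h1 : Cmat A L k a x ≠ 0 := fun h => hx (by simp [h])
    have h2 : A (L - k) x b ≠ 0 := fun h => hx (by simp [h])
    have hE : E b x := by
      by_contra h
      exact h2 (hresp (L - k) (by omega) (by omega) b x h)
    obtain ⟨w, hw0, hwl, hwE⟩ := ih (by omega) a x h1
    refine ⟨Fin.cons b w, Fin.cons_zero _ _, ?_, ?_⟩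
    · rw [show Fin.last (k + 1) = (Fin.last k).succ from rfl, Fin.cons_succ]
      exact hwl
    · intro t
      induction t using Fin.cases with
      | zero =>
        simpa [Fin.cons_zero, Fin.cons_succ, hw0] using hE
      | succ s =>
        have : (s.castSucc).succ = (s.succ).castSucc := Fin.succ_castSucc s
        rw [← this, Fin.cons_succ, Fin.cons_succ]
        exact hwE s

/-- **Locality of GAtt.**  Suppose the attention matrices respect the (symmetric,
reflexive) graph `E`.  If `j ≠ v` and for every `1 ≤ k ≤ L - 1` there is no walk of
length `k` from `j` to `v` in `E`, then `φ^v_{i,j} = 0` for every node `i`. -/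
theorem gattMat_eq_zero_of_far {V : Type*} [Fintype V] [DecidableEq V]
    (L : ℕ) (hL : 1 ≤ L) (A : ℕ → Matrix V V ℝ)
    (E : V → V → Prop) (hsymm : Symmetric E) (hrefl : Reflexive E)
    (hresp : ∀ l, 1 ≤ l → l ≤ L → ∀ a b : V, ¬ E a b → A l b a = 0)
    (v j : V) (hne : j ≠ v)
    (hnowalk : ∀ k, 1 ≤ k → k ≤ L - 1 →
      ¬ ∃ w : Fin (k + 1) → V,
          w 0 = j ∧ w (Fin.last k) = v ∧ ∀ t : Fin k, E (w t.castSucc) (w t.succ)) :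
    ∀ i : V, gattMat A L v i j = 0 := by
  intro i
  unfold gattMat
  apply Finset.sum_eq_zero
  intro m hm
  rw [Finset.mem_Icc] at hm
  have hCz : Cmat A L (L - m) v j = 0 := by
    rcases eq_or_lt_of_le hm.2 with h | h
    · subst h
      simp [Cmat, Matrix.one_apply, Ne.symm hne]
    · by_contra hC
      have hk1 : 1 ≤ L - m := by omega
      have hk2 : L - m ≤ L - 1 := by omega
      obtain ⟨w, hw⟩ := walk_of_Cmat_ne_zero L A E hresp (L - m) hk2 v j hC
      exact hnowalk (L - m) hk1 hk2 ⟨w, hw⟩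
  rw [hCz, zero_mul]
end

section
/- Suppose every column of every attention matrix A(l) sums to 1, i.e., Σ_{j∈V}[A(l)]_{j,i} = 1 for all l and all i. Then for every edge e_{i,j}, summing the matrix-form GAtt attribution over all target nodes yields the sum of its attention weights over the layers: Σ_{v∈V} φ^v_{i,j} = Σ_{m=1}^{L} [A(m)]_{j,i}; equivalently, (1/L)·Σ_{v∈V} φ^v_{i,j} equals the layer-averaged attention AvgAtt of edge e_{i,j}. -/
open Finset Matrix

/-- The layer-averaged attention (AvgAtt) of edge `e_{i,j}`:
`(1/L) ⬝ ∑_{m=1}^{L} [A(m)]_{j,i}`. -/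
noncomputable def avgAtt {V : Type*} [Fintype V] [DecidableEq V]
    (A : ℕ → Matrix V V ℝ) (L : ℕ) (i j : V) : ℝ :=
  (1 / (L : ℝ)) * ∑ m ∈ Finset.Icc 1 L, A m j i

lemma Cmat_col_sum {V : Type*} [Fintype V] [DecidableEq V]
    (L : ℕ) (A : ℕ → Matrix V V ℝ)
    (hcol : ∀ l, 1 ≤ l → l ≤ L → ∀ i : V, ∑ j : V, A l j i = 1) :
    ∀ k, k ≤ L → ∀ j : V, ∑ v : V, Cmat A L k v j = 1 := by
  intro k
  induction k with
  | zero =>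
    intro _ j
    simp [Cmat, Matrix.one_apply, Finset.sum_ite_eq, Finset.mem_univ]
  | succ k ih =>
    intro hk j
    have hk' : k ≤ L := Nat.le_of_succ_le hk
    have h1 : 1 ≤ L - k := Nat.le_sub_of_add_le (by omega)
    have h2 : L - k ≤ L := Nat.sub_le _ _
    simp only [Cmat, Matrix.mul_apply]
    rw [Finset.sum_comm]
    calc ∑ w : V, ∑ v : V, Cmat A L k v w * A (L - k) w j
        = ∑ w : V, (∑ v : V, Cmat A L k v w) * A (L - k) w j := by
          simp [Finset.sum_mul]
      _ = ∑ w : V, A (L - k) w j := by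
          refine Finset.sum_congr rfl fun w _ => ?_
          rw [ih hk' w, one_mul]
      _ = 1 := hcol _ h1 h2 j

/-- If every column of every attention matrix `A(l)` (`1 ≤ l ≤ L`) sums to `1`, then
summing the matrix-form GAtt attribution over all target nodes recovers the sum of the
attention weights of the edge over the layers:
`∑_{v} φ^v_{i,j} = ∑_{m=1}^{L} [A(m)]_{j,i}`; equivalently, `(1/L) ∑_v φ^v_{i,j}`
equals the layer-averaged attention AvgAtt of edge `e_{i,j}`. -/
theorem sum_gattMat_eq_sum_attn {V : Type*} [Fintype V] [DecidableEq V]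
    (L : ℕ) (hL : 1 ≤ L) (A : ℕ → Matrix V V ℝ)
    (hcol : ∀ l, 1 ≤ l → l ≤ L → ∀ i : V, ∑ j : V, A l j i = 1) :
    ∀ i j : V,
      (∑ v : V, gattMat A L v i j) = ∑ m ∈ Finset.Icc 1 L, A m j i ∧
      (1 / (L : ℝ)) * (∑ v : V, gattMat A L v i j) = avgAtt A L i j := by
  intro i j
  have key : (∑ v : V, gattMat A L v i j) = ∑ m ∈ Finset.Icc 1 L, A m j i := by
    unfold gattMat
    rw [Finset.sum_comm]
    refine Finset.sum_congr rfl fun m hm => ?_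
    rw [← Finset.sum_mul, Cmat_col_sum L A hcol (L - m) (Nat.sub_le _ _) j, one_mul]
  exact ⟨key, by rw [key, avgAtt]⟩
end

section
/- Let L ≥ 1, suppose the attention matrices respect the graph (i.e., [A(l)]_{b,a} = 0 whenever (a,b) ∉ E), and suppose Σ_{m=1}^{L} [T^{m−1}]_{v,j} ≠ 0 (there is at least one flow from e_{i,j} to v). Then the flow-form GAtt_avg attribution equals ( Σ_{m=1}^{L} [C_L(L−m)]_{v,j}[A(m)]_{j,i} ) / ( Σ_{m=1}^{L} [T^{m−1}]_{v,j} ), where T is the real 0/1 adjacency matrix of (V, E). (Matrix form of the ablation variant GAtt_avg, Equation (6) of the paper.) -/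
open Finset Matrix

/-- The real 0/1 adjacency matrix of `(V, E)`: `[T]_{u,w} = 1` iff `(w,u) ∈ E`. -/
def adjReal {V : Type*} [Fintype V] [DecidableEq V]
    (E : V → V → Prop) [DecidableRel E] : Matrix V V ℝ :=
  fun u w => if E w u then 1 else 0

/-- The flow-form GAtt_avg attribution
`Φ_avg^v_{i,j} = (1/|Λ_v(e_{i,j})|) ∑_{m=1}^{L} ∑_{λ ∈ Λ_v^m(e_{i,j})} C(α[λ]) α[λ](1)`,
where `|Λ_v(e_{i,j})| = ∑_{m=1}^{L} |Λ_v^m(e_{i,j})|`. -/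
noncomputable def gattAvgFlow {V : Type*} [Fintype V] [DecidableEq V]
    (A : ℕ → Matrix V V ℝ) (E : V → V → Prop) [DecidableRel E]
    (L : ℕ) (v i j : V) : ℝ :=
  (1 / ((∑ m ∈ Finset.Icc 1 L, (walks E (m - 1) j v).card : ℕ) : ℝ)) *
    ∑ m ∈ Finset.Icc 1 L, ∑ w ∈ walks E (m - 1) j v, contrib A L (m - 1) i w


def matProd {V : Type*} [Fintype V] [DecidableEq V]
    (B : ℕ → Matrix V V ℝ) : ℕ → Matrix V V ℝ
  | 0 => 1
  | n + 1 => B n * matProd B n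

lemma matProd_shift {V : Type*} [Fintype V] [DecidableEq V]
    (B : ℕ → Matrix V V ℝ) : ∀ n, matProd B (n + 1) = matProd (fun k => B (k + 1)) n * B 0
  | 0 => by simp [matProd]
  | n + 1 => by
    show B (n + 1) * matProd B (n + 1) = matProd (fun k => B (k + 1)) (n + 1) * B 0
    rw [matProd_shift B n]
    show _ = (fun k => B (k + 1)) n * matProd (fun k => B (k + 1)) n * B 0
    rw [← mul_assoc]

lemma matProd_const {V : Type*} [Fintype V] [DecidableEq V]
    (M : Matrix V V ℝ) : ∀ n, matProd (fun _ => M) n = M ^ n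
  | 0 => by simp [matProd]
  | n + 1 => by rw [pow_succ']; show M * matProd (fun _ => M) n = _; rw [matProd_const M n]

lemma pathSum {V : Type*} [Fintype V] [DecidableEq V] :
    ∀ (n : ℕ) (B : ℕ → Matrix V V ℝ) (v : V) (g : V → ℝ),
    ∑ w ∈ Finset.univ.filter (fun w : Fin (n + 1) → V => w (Fin.last n) = v),
      (∏ t : Fin n, B t.val (w t.succ) (w t.castSucc)) * g (w 0)
    = ∑ u, matProd B n v u * g u
  | 0, B, v, g => by
    rw [Finset.sum_filter, ← (Equiv.funUnique (Fin 1) V).symm.sum_comp]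
    simp [matProd, Matrix.one_apply, eq_comm]
  | n + 1, B, v, g => by
    rw [Finset.sum_filter, ← (Fin.consEquiv (fun _ : Fin (n + 2) => V)).sum_comp,
      Fintype.sum_prod_type]
    have step : ∀ (a : V) (w' : Fin (n + 1) → V),
        (if (Fin.consEquiv (fun _ : Fin (n + 2) => V)) (a, w') (Fin.last (n + 1)) = v then
          (∏ t : Fin (n + 1), B t.val ((Fin.consEquiv (fun _ : Fin (n + 2) => V)) (a, w') t.succ)
            ((Fin.consEquiv (fun _ : Fin (n + 2) => V)) (a, w') t.castSucc)) *
            g ((Fin.consEquiv (fun _ : Fin (n + 2) => V)) (a, w') 0) else 0)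
        = if w' (Fin.last n) = v then
            (∏ t : Fin n, B (t.val + 1) (w' t.succ) (w' t.castSucc)) * (B 0 (w' 0) a * g a)
          else 0 := by
      intro a w'
      simp only [Fin.consEquiv_apply]
      have hlast : (Fin.cons a w' : Fin (n + 2) → V) (Fin.last (n + 1)) = w' (Fin.last n) := by
        rw [← Fin.succ_last, Fin.cons_succ]
      have hprod : (∏ t : Fin (n + 1), B t.val ((Fin.cons a w' : Fin (n+2) → V) t.succ)
            ((Fin.cons a w' : Fin (n+2) → V) t.castSucc))
          = B 0 (w' 0) a * ∏ t : Fin n, B (t.val + 1) (w' t.succ) (w' t.castSucc) := by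
        rw [Fin.prod_univ_succ]
        simp only [Fin.val_succ, ← Fin.succ_castSucc, Fin.cons_succ, Fin.castSucc_zero,
          Fin.cons_zero, Fin.val_zero]
      rw [hlast, hprod, Fin.cons_zero]
      by_cases h : w' (Fin.last n) = v <;> simp [h] <;> ring
    calc (∑ a : V, ∑ w' : Fin (n + 1) → V, _)
        = ∑ a : V, ∑ w' : Fin (n + 1) → V,
            (if w' (Fin.last n) = v then
              (∏ t : Fin n, B (t.val + 1) (w' t.succ) (w' t.castSucc)) * (B 0 (w' 0) a * g a)
             else 0) := by
          exact Finset.sum_congr rfl fun a _ => Finset.sum_congr rfl fun w' _ => step a w'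
      _ = ∑ a : V, ∑ u, matProd (fun k => B (k + 1)) n v u * (B 0 u a * g a) := by
          refine Finset.sum_congr rfl fun a _ => ?_
          rw [← Finset.sum_filter]
          exact pathSum n (fun k => B (k + 1)) v (fun u => B 0 u a * g a)
      _ = ∑ a : V, matProd B (n + 1) v a * g a := by
          refine Finset.sum_congr rfl fun a _ => ?_
          rw [matProd_shift, Matrix.mul_apply, Finset.sum_mul]
          exact Finset.sum_congr rfl fun u _ => by ring

lemma card_walks {V : Type*} [Fintype V] [DecidableEq V]
    (E : V → V → Prop) [DecidableRel E] (n : ℕ) (j v : V) :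
    ((walks E n j v).card : ℝ) = (adjReal E ^ n) v j := by
  have h := pathSum n (fun _ => adjReal E) v (fun u => if u = j then (1 : ℝ) else 0)
  rw [matProd_const] at h
  have hr : ∑ u, (adjReal E ^ n) v u * (if u = j then (1:ℝ) else 0) = (adjReal E ^ n) v j := by
    simp
  rw [hr] at h
  rw [← h, Finset.sum_filter, walks]
  rw [Finset.card_filter]
  push_cast
  refine Finset.sum_congr rfl fun w _ => ?_
  have hp : (∏ t : Fin n, adjReal E (w t.succ) (w t.castSucc))
      = if ∀ t : Fin n, E (w t.castSucc) (w t.succ) then (1:ℝ) else 0 := by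
    rw [show (∏ t : Fin n, adjReal E (w t.succ) (w t.castSucc))
        = ∏ t : Fin n, (if E (w t.castSucc) (w t.succ) then (1:ℝ) else 0) from rfl,
      Finset.prod_boole]
    simp
  rw [hp]
  by_cases h0 : w 0 = j <;> by_cases h1 : w (Fin.last n) = v <;>
    by_cases h2 : ∀ t : Fin n, E (w t.castSucc) (w t.succ) <;>
    simp [h0, h1, h2]

lemma matProd_eq_Cmat {V : Type*} [Fintype V] [DecidableEq V]
    (A : ℕ → Matrix V V ℝ) (L : ℕ) :
    ∀ n, n ≤ L → matProd (fun t => A (L - n + 1 + t)) n = Cmat A L n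
  | 0, _ => rfl
  | n + 1, h => by
    rw [matProd_shift]
    have h1 : (fun k => (fun t => A (L - (n + 1) + 1 + t)) (k + 1))
        = fun t => A (L - n + 1 + t) := by
      funext t
      show A (L - (n + 1) + 1 + (t + 1)) = A (L - n + 1 + t)
      have e : L - (n + 1) + 1 + (t + 1) = L - n + 1 + t := by omega
      rw [e]
    have h2 : A (L - (n + 1) + 1 + 0) = A (L - n) := by
      have e : L - (n + 1) + 1 + 0 = L - n := by omega
      rw [e]
    rw [h1, h2, matProd_eq_Cmat A L n (by omega)]
    rfl

lemma sum_contrib {V : Type*} [Fintype V] [DecidableEq V]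
    (A : ℕ → Matrix V V ℝ) (L : ℕ) (E : V → V → Prop) [DecidableRel E]
    (hresp : ∀ l, 1 ≤ l → l ≤ L → ∀ a b : V, ¬ E a b → A l b a = 0)
    (n : ℕ) (hn : n + 1 ≤ L) (i j v : V) :
    ∑ w ∈ walks E n j v, contrib A L n i w
      = Cmat A L n v j * A (L - n) j i := by
  have hB : (fun t => A (L - (n + 1) + (t + 2)))
      = (fun t => A (L - n + 1 + t) : ℕ → Matrix V V ℝ) := by
    funext t
    show A (L - (n + 1) + (t + 2)) = A (L - n + 1 + t)
    have e : L - (n + 1) + (t + 2) = L - n + 1 + t := by omega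
    rw [e]
  have hm : matProd (fun t => A (L - (n + 1) + (t + 2))) n = Cmat A L n := by
    rw [hB]
    exact matProd_eq_Cmat A L n (by omega)
  have key : ∑ w ∈ Finset.univ.filter (fun w : Fin (n + 1) → V => w (Fin.last n) = v),
      (∏ t : Fin n, A (L - (n + 1) + (t.val + 2)) (w t.succ) (w t.castSucc)) *
        (if w 0 = j then A (L - (n + 1) + 1) (w 0) i else 0)
      = ∑ u, Cmat A L n v u * (if u = j then A (L - (n + 1) + 1) u i else 0) := by
    have h := pathSum n (fun t => A (L - (n + 1) + (t + 2))) v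
      (fun u => if u = j then A (L - (n + 1) + 1) u i else 0)
    rw [hm] at h
    exact h
  have hr : ∑ u, Cmat A L n v u * (if u = j then A (L - (n + 1) + 1) u i else 0)
      = Cmat A L n v j * A (L - n) j i := by
    rw [Finset.sum_eq_single j]
    · rw [if_pos rfl]
      have : L - (n + 1) + 1 = L - n := by omega
      rw [this]
    · intro u _ hu; simp [hu]
    · intro h; exact absurd (Finset.mem_univ j) h
  rw [hr] at key
  rw [← key]
  have hsub : walks E n j v ⊆ Finset.univ.filter (fun w : Fin (n + 1) → V => w (Fin.last n) = v) := by
    intro w hw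
    rw [walks, Finset.mem_filter] at hw
    exact Finset.mem_filter.2 ⟨Finset.mem_univ w, hw.2.2.1⟩
  calc ∑ w ∈ walks E n j v, contrib A L n i w
      = ∑ w ∈ walks E n j v,
        (∏ t : Fin n, A (L - (n + 1) + (t.val + 2)) (w t.succ) (w t.castSucc)) *
          (if w 0 = j then A (L - (n + 1) + 1) (w 0) i else 0) := by
        refine Finset.sum_congr rfl fun w hw => ?_
        rw [walks, Finset.mem_filter] at hw
        rw [contrib, if_pos hw.2.1]
    _ = ∑ w ∈ Finset.univ.filter (fun w : Fin (n + 1) → V => w (Fin.last n) = v),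
        (∏ t : Fin n, A (L - (n + 1) + (t.val + 2)) (w t.succ) (w t.castSucc)) *
          (if w 0 = j then A (L - (n + 1) + 1) (w 0) i else 0) := by
        refine Finset.sum_subset hsub fun w hw hnw => ?_
        rw [Finset.mem_filter] at hw
        rw [walks, Finset.mem_filter] at hnw
        push_neg at hnw
        by_cases h0 : w 0 = j
        · have h2 := hnw (Finset.mem_univ w) h0 hw.2
          obtain ⟨t, ht⟩ := h2
          have hz : A (L - (n + 1) + (t.val + 2)) (w t.succ) (w t.castSucc) = 0 :=
            hresp _ (by omega) (by have := t.isLt; omega) _ _ ht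
          rw [Finset.prod_eq_zero (Finset.mem_univ t) hz, zero_mul]
        · rw [if_neg h0, mul_zero]

/-- **Matrix form of the ablation variant GAtt_avg.**  For `L ≥ 1`, attention matrices
respecting the (symmetric, reflexive) graph `E`, and assuming
`∑_{m=1}^{L} [T^{m-1}]_{v,j} ≠ 0` (at least one flow from `e_{i,j}` to `v` exists), the
flow-form GAtt_avg attribution equals
`(∑_{m=1}^{L} [C_L(L-m)]_{v,j} [A(m)]_{j,i}) / (∑_{m=1}^{L} [T^{m-1}]_{v,j})`. -/
theorem gattAvgFlow_eq_matrix {V : Type*} [Fintype V] [DecidableEq V]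
    (L : ℕ) (hL : 1 ≤ L) (A : ℕ → Matrix V V ℝ)
    (E : V → V → Prop) [DecidableRel E]
    (hsymm : Symmetric E) (hrefl : Reflexive E)
    (hresp : ∀ l, 1 ≤ l → l ≤ L → ∀ a b : V, ¬ E a b → A l b a = 0)
    (v i j : V)
    (hflow : ∑ m ∈ Finset.Icc 1 L, (adjReal E ^ (m - 1)) v j ≠ 0) :
    gattAvgFlow A E L v i j =
      (∑ m ∈ Finset.Icc 1 L, Cmat A L (L - m) v j * A m j i) /
        (∑ m ∈ Finset.Icc 1 L, (adjReal E ^ (m - 1)) v j) := by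
  rw [gattAvgFlow]
  have hden : ((∑ m ∈ Finset.Icc 1 L, (walks E (m - 1) j v).card : ℕ) : ℝ)
      = ∑ m ∈ Finset.Icc 1 L, (adjReal E ^ (m - 1)) v j := by
    push_cast
    exact Finset.sum_congr rfl fun m _ => card_walks E (m - 1) j v
  have hnum : (∑ m ∈ Finset.Icc 1 L, ∑ w ∈ walks E (m - 1) j v, contrib A L (m - 1) i w)
      = ∑ m ∈ Finset.Icc 1 L, Cmat A L (L - m) v j * A m j i := by
    have h1 : (∑ m ∈ Finset.Icc 1 L, ∑ w ∈ walks E (m - 1) j v, contrib A L (m - 1) i w)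
        = ∑ m ∈ Finset.Icc 1 L, Cmat A L (m - 1) v j * A (L - (m - 1)) j i := by
      refine Finset.sum_congr rfl fun m hm => ?_
      rw [Finset.mem_Icc] at hm
      have hm1 : m - 1 + 1 ≤ L := by omega
      have := sum_contrib A L E hresp (m - 1) hm1 i j v
      rw [this]
    rw [h1]
    rw [show Finset.Icc 1 L = Finset.Ico 1 (L + 1) from (Finset.Ico_add_one_right_eq_Icc 1 L).symm,
      Finset.sum_Ico_eq_sum_range, Finset.sum_Ico_eq_sum_range]
    rw [← Finset.sum_range_reflect]
    refine Finset.sum_congr rfl fun k hk => ?_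
    rw [Finset.mem_range] at hk
    have e2 : 1 + (L + 1 - 1 - 1 - k) - 1 = L - (1 + k) := by omega
    have e3 : L - (1 + (L + 1 - 1 - 1 - k) - 1) = 1 + k := by omega
    rw [e3, e2]
  rw [hden, hnum, one_div_mul_eq_div]
end
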